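/- Let V be a finite-dimensional real vector space, 𝕋V = V × V* with pairing ⟨(u,ξ),(v,η)⟩ = ξ(v) + η(u), and L ⊆ 𝕋V a Lagrangian subspace. For any subspace F ⊆ V, one has L[F × {0}] = L ⊛ (F × ann(F)), where L[J] := (L ∩ J^⊥) + J, ann(F) := {ξ ∈ V* : ξ(v) = 0 for all v ∈ F}, and ⊛ is the cotangent product. -/

import Mathlib

open Module

variable {V W : Type*} [AddCommGroup V] [Module ℝ V] [AddCommGroup W] [Module ℝ W]

/-- The canonical symmetric pairing on the generalized tangent space `𝕋V = V × V*`: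
`⟨(u,ξ),(v,η)⟩ = ξ(v) + η(u)`. -/
noncomputable def gpair : (V × Module.Dual ℝ V) →ₗ[ℝ] (V × Module.Dual ℝ V) →ₗ[ℝ] ℝ :=
  LinearMap.mk₂ ℝ (fun a b => a.2 b.1 + b.2 a.1)
    (fun a a' b => by
      simp only [Prod.fst_add, Prod.snd_add, LinearMap.add_apply, map_add]; ring)
    (fun r a b => by
      simp only [Prod.smul_fst, Prod.smul_snd, LinearMap.smul_apply, map_smul,
        smul_eq_mul]; ring)
    (fun a b b' => by
      simp only [Prod.fst_add, Prod.snd_add, LinearMap.add_apply, map_add]; ring)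
    (fun r a b => by
      simp only [Prod.smul_fst, Prod.smul_snd, LinearMap.smul_apply, map_smul,
        smul_eq_mul]; ring)

/-- Orthogonal complement with respect to the canonical pairing on `𝕋V`. -/
noncomputable def gperp (S : Submodule ℝ (V × Module.Dual ℝ V)) :
    Submodule ℝ (V × Module.Dual ℝ V) where
  carrier := {a | ∀ b ∈ S, gpair a b = 0}
  add_mem' := by
    intro a b ha hb c hc
    rw [map_add, LinearMap.add_apply, ha c hc, hb c hc, add_zero]
  zero_mem' := by
    intro c hc
    rw [map_zero, LinearMap.zero_apply]
  smul_mem' := by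
    intro r a ha c hc
    rw [map_smul, LinearMap.smul_apply, ha c hc, smul_zero]

/-- A subspace of `𝕋V` is Lagrangian if it equals its own orthogonal complement. -/
def IsLagrangian (L : Submodule ℝ (V × Module.Dual ℝ V)) : Prop :=
  gperp L = L

/-- A linear map `π : V* → V` is skew-symmetric. -/
def IsSkew (π : Module.Dual ℝ V →ₗ[ℝ] V) : Prop :=
  ∀ ξ η : Module.Dual ℝ V, η (π ξ) = -(ξ (π η))

/-- The tangent product `L ⋆ R = {(u, ξ+η) : (u,ξ) ∈ L, (u,η) ∈ R}`. -/
def tanProd (L R : Submodule ℝ (V × Module.Dual ℝ V)) :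
    Submodule ℝ (V × Module.Dual ℝ V) where
  carrier := {a | ∃ ξ η : Module.Dual ℝ V, (a.1, ξ) ∈ L ∧ (a.1, η) ∈ R ∧ a.2 = ξ + η}
  add_mem' := by
    rintro a b ⟨ξ, η, h1, h2, h3⟩ ⟨ξ', η', h1', h2', h3'⟩
    refine ⟨ξ + ξ', η + η', ?_, ?_, ?_⟩
    · simpa [Prod.fst_add] using L.add_mem h1 h1'
    · simpa [Prod.fst_add] using R.add_mem h2 h2'
    · simp only [Prod.snd_add, h3, h3']; abel
  zero_mem' := ⟨0, 0, by convert L.zero_mem using 1; ext <;> simp, by convert R.zero_mem using 1; ext <;> simp, by simp⟩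
  smul_mem' := by
    rintro r a ⟨ξ, η, h1, h2, h3⟩
    refine ⟨r • ξ, r • η, ?_, ?_, ?_⟩
    · simpa [Prod.smul_fst] using L.smul_mem r h1
    · simpa [Prod.smul_fst] using R.smul_mem r h2
    · simp only [Prod.smul_snd, h3, smul_add]

/-- The cotangent product `L ⊛ R = {(u+v, ξ) : (u,ξ) ∈ L, (v,ξ) ∈ R}`. -/
def cotProd (L R : Submodule ℝ (V × Module.Dual ℝ V)) :
    Submodule ℝ (V × Module.Dual ℝ V) where
  carrier := {a | ∃ u v : V, (u, a.2) ∈ L ∧ (v, a.2) ∈ R ∧ a.1 = u + v}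
  add_mem' := by
    rintro a b ⟨u, v, h1, h2, h3⟩ ⟨u', v', h1', h2', h3'⟩
    refine ⟨u + u', v + v', ?_, ?_, ?_⟩
    · simpa [Prod.snd_add] using L.add_mem h1 h1'
    · simpa [Prod.snd_add] using R.add_mem h2 h2'
    · simp only [Prod.fst_add, h3, h3']; abel
  zero_mem' := ⟨0, 0, by convert L.zero_mem using 1; ext <;> simp, by convert R.zero_mem using 1; ext <;> simp, by simp⟩
  smul_mem' := by
    rintro r a ⟨u, v, h1, h2, h3⟩
    refine ⟨r • u, r • v, ?_, ?_, ?_⟩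
    · simpa [Prod.smul_snd] using L.smul_mem r h1
    · simpa [Prod.smul_snd] using R.smul_mem r h2
    · simp only [Prod.smul_fst, h3, smul_add]

/-- The backward image `φ^!(L) = {(u, η ∘ φ) : (φ(u), η) ∈ L}`. -/
def back (φ : V →ₗ[ℝ] W) (L : Submodule ℝ (W × Module.Dual ℝ W)) :
    Submodule ℝ (V × Module.Dual ℝ V) where
  carrier := {a | ∃ η : Module.Dual ℝ W, (φ a.1, η) ∈ L ∧ a.2 = η.comp φ}
  add_mem' := by
    rintro a b ⟨η, h1, h2⟩ ⟨η', h1', h2'⟩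
    refine ⟨η + η', ?_, ?_⟩
    · simpa [Prod.fst_add, map_add] using L.add_mem h1 h1'
    · simp only [Prod.snd_add, h2, h2', LinearMap.add_comp]
  zero_mem' := ⟨0, by convert L.zero_mem using 1; ext <;> simp, by simp⟩
  smul_mem' := by
    rintro r a ⟨η, h1, h2⟩
    refine ⟨r • η, ?_, ?_⟩
    · simpa [Prod.smul_fst, map_smul] using L.smul_mem r h1
    · simp only [Prod.smul_snd, h2, LinearMap.smul_comp]

/-- The forward image `φ_!(L) = {(φ(u), η) : (u, η ∘ φ) ∈ L}`. -/
def fwd (φ : V →ₗ[ℝ] W) (L : Submodule ℝ (V × Module.Dual ℝ V)) :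
    Submodule ℝ (W × Module.Dual ℝ W) where
  carrier := {b | ∃ u : V, φ u = b.1 ∧ (u, b.2.comp φ) ∈ L}
  add_mem' := by
    rintro a b ⟨u, h1, h2⟩ ⟨u', h1', h2'⟩
    refine ⟨u + u', ?_, ?_⟩
    · simp only [map_add, h1, h1', Prod.fst_add]
    · have := L.add_mem h2 h2'
      simpa [Prod.snd_add, LinearMap.add_comp] using this
  zero_mem' := ⟨0, by simp, by convert L.zero_mem using 1; ext <;> simp⟩
  smul_mem' := by
    rintro r a ⟨u, h1, h2⟩
    refine ⟨r • u, ?_, ?_⟩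
    · simp only [map_smul, h1, Prod.smul_fst]
    · have := L.smul_mem r h2
      simpa [Prod.smul_snd, LinearMap.smul_comp] using this

/-- The graph `Gr(π) = {(π(ξ), ξ) : ξ ∈ V*}` of a map `π : V* → V`. -/
def gr (π : Module.Dual ℝ V →ₗ[ℝ] V) : Submodule ℝ (V × Module.Dual ℝ V) where
  carrier := {a | π a.2 = a.1}
  add_mem' := by
    intro a b ha hb
    simp only [Set.mem_setOf_eq, Prod.fst_add, Prod.snd_add, map_add] at *
    rw [ha, hb]
  zero_mem' := by simp
  smul_mem' := by
    intro r a ha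
    simp only [Set.mem_setOf_eq, Prod.smul_fst, Prod.smul_snd, map_smul] at *
    rw [ha]

theorem gperp_prod_bot (F : Submodule ℝ V) :
    gperp (F.prod (⊥ : Submodule ℝ (Dual ℝ V))) = (⊤ : Submodule ℝ V).prod F.dualAnnihilator := by
  ext ⟨u, ξ⟩
  simp only [gperp, gpair, Submodule.mem_mk, AddSubmonoid.mem_mk, AddSubsemigroup.mem_mk,
    Set.mem_ofPred_eq, Submodule.mem_prod, Submodule.mem_top, true_and,
    Submodule.mem_dualAnnihilator, Submodule.mem_bot, LinearMap.mk₂_apply]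
  constructor
  · intro h w hw
    simpa using h (w, 0) ⟨hw, rfl⟩
  · rintro h ⟨w, η⟩ ⟨hw, rfl⟩
    simp [h w hw]

theorem inf_prod_sup_prod_bot_eq_cotProd (L : Submodule ℝ (V × Dual ℝ V))
    (F : Submodule ℝ V) (A : Submodule ℝ (Dual ℝ V)) :
    (L ⊓ (⊤ : Submodule ℝ V).prod A) ⊔ F.prod ⊥ = cotProd L (F.prod A) := by
  ext a
  constructor
  · intro h
    obtain ⟨b, ⟨hbL, -, hbA⟩, c, ⟨hcF, hc0 : c.2 = 0⟩, rfl⟩ := Submodule.mem_sup.mp h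
    refine ⟨b.1, c.1, ?_, ⟨hcF, ?_⟩, rfl⟩
    · simpa [hc0] using hbL
    · simpa [hc0] using hbA
  · rintro ⟨u, v, hu, ⟨hvF, hA⟩, hsplit⟩
    have ha : a = (u, a.2) + (v, 0) := Prod.ext (by simp [hsplit]) (by simp)
    rw [ha]
    exact Submodule.add_mem_sup ⟨hu, trivial, hA⟩ ⟨hvF, Submodule.zero_mem _⟩

theorem stmt9_general
    (L : Submodule ℝ (V × Module.Dual ℝ V))
    (F : Submodule ℝ V) :
    (L ⊓ gperp (F.prod (⊥ : Submodule ℝ (Module.Dual ℝ V))))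
        ⊔ F.prod (⊥ : Submodule ℝ (Module.Dual ℝ V))
      = cotProd L (F.prod F.dualAnnihilator) := by
  rw [gperp_prod_bot, inf_prod_sup_prod_bot_eq_cotProd]

theorem stmt9 [FiniteDimensional ℝ V]
    (L : Submodule ℝ (V × Module.Dual ℝ V)) (hL : IsLagrangian L)
    (F : Submodule ℝ V) :
    (L ⊓ gperp (F.prod (⊥ : Submodule ℝ (Module.Dual ℝ V))))
        ⊔ F.prod (⊥ : Submodule ℝ (Module.Dual ℝ V))
      = cotProd L (F.prod F.dualAnnihilator) :=
  stmt9_general L F
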